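/- Suppose every node has degree d_i ≥ 1, n ≥ 1, and p < 1. Then |d_avg − E_pri[D*]/E_pri[Σ_{v_i∈V*} d_i*/d_i]| ≤ |d_avg − E_pri[D*]/E_pri[n*]|; that is, the expected error of the proposed average-degree estimator's convergence value is at most that of the existing Smooth estimator. -/
import Mathlib


open Finset

/-- Probability of a particular assignment `ω` of privacy labels, where `ω i = true`
means node `v_i` is private: each node is independently private with probability `p`. -/
noncomputable def priWeight {n : ℕ} (p : ℝ) (ω : Fin n → Bool) : ℝ :=
  ∏ i, if ω i then p else 1 - p

/-- The (random) set `V*` of public nodes under the labeling `ω`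
(modeling the condition that all public nodes belong to the largest public-cluster). -/
def pubNodes {n : ℕ} (ω : Fin n → Bool) : Finset (Fin n) :=
  Finset.univ.filter fun i => ω i = false

/-- The public-degree `d_i*` of node `v_i`: its number of public neighbors. -/
def pubDeg {n : ℕ} (G : SimpleGraph (Fin n)) [DecidableRel G.Adj]
    (ω : Fin n → Bool) (i : Fin n) : ℕ :=
  ((G.neighborFinset i).filter fun j => ω j = false).card

lemma sum_prod_bool (n : ℕ) (g : Fin n → Bool → ℝ) :
    ∑ ω : Fin n → Bool, ∏ k, g k (ω k) = ∏ k, (g k true + g k false) := by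
  classical
  have h := Finset.prod_univ_sum (fun _ : Fin n => (Finset.univ : Finset Bool)) g
  rw [Fintype.piFinset_univ] at h
  rw [← h]
  exact Finset.prod_congr rfl fun k _ => by simp [Fintype.sum_bool]

lemma exp_pair {n : ℕ} (p : ℝ) {i j : Fin n} (hij : i ≠ j) :
    ∑ ω : Fin n → Bool, priWeight p ω *
      ((if ω i = false then (1:ℝ) else 0) * (if ω j = false then (1:ℝ) else 0))
      = (1-p)^2 := by
  classical
  have key : ∀ ω : Fin n → Bool, priWeight p ω *
      ((if ω i = false then (1:ℝ) else 0) * (if ω j = false then (1:ℝ) else 0))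
      = ∏ k, ((if ω k then p else 1-p) *
          ((if k = i then (if ω k = false then (1:ℝ) else 0) else 1) *
           (if k = j then (if ω k = false then (1:ℝ) else 0) else 1))) := by
    intro ω
    rw [Finset.prod_mul_distrib, Finset.prod_mul_distrib, Finset.prod_ite_eq',
      Finset.prod_ite_eq']
    simp [priWeight]
  simp only [key]
  rw [sum_prod_bool n (fun k b => (if b then p else 1-p) *
      ((if k = i then (if b = false then (1:ℝ) else 0) else 1) *
       (if k = j then (if b = false then (1:ℝ) else 0) else 1)))]
  trans (∏ k : Fin n, if k ∈ ({i, j} : Finset (Fin n)) then 1-p else 1)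
  · exact Finset.prod_congr rfl fun k _ => by
      by_cases hki : k = i <;> by_cases hkj : k = j <;> simp [hki, hkj]
  · rw [Finset.prod_ite_mem, Finset.univ_inter, Finset.prod_const,
      Finset.card_pair hij]

lemma exp_weighted (n : ℕ) (p : ℝ) (G : SimpleGraph (Fin n)) [DecidableRel G.Adj]
    (g : Fin n → ℝ) :
    ∑ ω : Fin n → Bool, priWeight p ω * ∑ i ∈ pubNodes ω, g i * (pubDeg G ω i : ℝ)
      = (1-p)^2 * ∑ i, g i * (G.degree i : ℝ) := by
  classical
  have step : ∀ ω : Fin n → Bool,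
      priWeight p ω * ∑ i ∈ pubNodes ω, g i * (pubDeg G ω i : ℝ)
      = ∑ i, ∑ j ∈ G.neighborFinset i, g i *
          (priWeight p ω * ((if ω i = false then (1:ℝ) else 0) *
            (if ω j = false then (1:ℝ) else 0))) := by
    intro ω
    unfold pubNodes pubDeg
    rw [Finset.sum_filter, Finset.mul_sum]
    refine Finset.sum_congr rfl fun i _ => ?_
    by_cases hi : ω i = false
    · rw [if_pos hi, Finset.card_filter]
      push_cast
      rw [Finset.mul_sum, Finset.mul_sum]
      refine Finset.sum_congr rfl fun j _ => ?_
      simp [hi]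
      ring_nf
    · simp [hi]
  simp only [step]
  rw [Finset.sum_comm]
  rw [Finset.mul_sum]
  refine Finset.sum_congr rfl fun i _ => ?_
  rw [Finset.sum_comm]
  have : ∀ j ∈ G.neighborFinset i,
      (∑ ω : Fin n → Bool, g i * (priWeight p ω * ((if ω i = false then (1:ℝ) else 0) *
        (if ω j = false then (1:ℝ) else 0)))) = g i * (1-p)^2 := by
    intro j hj
    rw [← Finset.mul_sum, exp_pair p (G.ne_of_adj ((SimpleGraph.mem_neighborFinset G i j).mp hj))]
  rw [Finset.sum_congr rfl this, Finset.sum_const, G.card_neighborFinset_eq_degree,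
    nsmul_eq_mul]
  ring

/-- Corollary 4.13. Suppose every node of the finite simple graph `G`
on `n ≥ 1` nodes has degree `d_i ≥ 1` and `p < 1`.  Then
`|d_avg − E_pri[D*]/E_pri[Σ_{v_i∈V*} d_i*/d_i]| ≤ |d_avg − E_pri[D*]/E_pri[n*]|`:
the expected error of the proposed average-degree estimator's convergence value is at
most that of the existing Smooth estimator. -/
theorem stmt_19 (n : ℕ) (hn : 1 ≤ n) (G : SimpleGraph (Fin n)) [DecidableRel G.Adj]
    (p : ℝ) (hp0 : 0 ≤ p) (hp1 : p < 1) (hdeg : ∀ i, 1 ≤ G.degree i) :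
    |(∑ i, (G.degree i : ℝ)) / (n : ℝ) -
        (∑ ω : Fin n → Bool, priWeight p ω * ∑ i ∈ pubNodes ω, (pubDeg G ω i : ℝ)) /
          (∑ ω : Fin n → Bool, priWeight p ω *
            ∑ i ∈ pubNodes ω, (pubDeg G ω i : ℝ) / (G.degree i : ℝ))|
      ≤ |(∑ i, (G.degree i : ℝ)) / (n : ℝ) -
          (∑ ω : Fin n → Bool, priWeight p ω * ∑ i ∈ pubNodes ω, (pubDeg G ω i : ℝ)) /
            (∑ ω : Fin n → Bool, priWeight p ω * ((pubNodes ω).card : ℝ))| := by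
  have hdne : ∀ i, ((G.degree i : ℝ)) ≠ 0 := fun i => by
    have := hdeg i; positivity
  have hS1 : (∑ ω : Fin n → Bool, priWeight p ω * ∑ i ∈ pubNodes ω, (pubDeg G ω i : ℝ))
      = (1-p)^2 * ∑ i, (G.degree i : ℝ) := by
    have h := exp_weighted n p G (fun _ => 1)
    simpa using h
  have hS2 : (∑ ω : Fin n → Bool, priWeight p ω *
      ∑ i ∈ pubNodes ω, (pubDeg G ω i : ℝ) / (G.degree i : ℝ))
      = (1-p)^2 * n := by
    have h := exp_weighted n p G (fun i => ((G.degree i : ℝ))⁻¹)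
    have h2 : ∀ ω : Fin n → Bool, (∑ i ∈ pubNodes ω, (pubDeg G ω i : ℝ) / (G.degree i : ℝ))
        = ∑ i ∈ pubNodes ω, ((G.degree i : ℝ))⁻¹ * (pubDeg G ω i : ℝ) := by
      intro ω
      exact Finset.sum_congr rfl fun i _ => by rw [div_eq_inv_mul]
    simp only [h2]
    rw [h]
    have : ∀ i : Fin n, ((G.degree i : ℝ))⁻¹ * (G.degree i : ℝ) = 1 := fun i =>
      inv_mul_cancel₀ (hdne i)
    rw [Finset.sum_congr rfl fun i _ => this i]
    simp
  rw [hS1, hS2]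
  have h1p : (0:ℝ) < 1 - p := by linarith
  have hq : ((1:ℝ)-p)^2 ≠ 0 := pow_ne_zero 2 (ne_of_gt h1p)
  rw [mul_div_mul_left _ _ hq, sub_self, abs_zero]
  exact abs_nonneg _
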